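/- Let σ > 0, ξ < 0 and let a be a real constant with a > ξ. Then ∫_0^{−σ/ξ} v^{−a/ξ} · σ^{−1} (1 + ξ v/σ)^{−(1+1/ξ)} dv = (−ξ)^{a/ξ − 1} σ^{−a/ξ} Γ(1 − a/ξ) Γ(−1/ξ) / Γ(1 − (a+1)/ξ), where Γ denotes the Gamma function. -/
import Mathlib

open MeasureTheory Real Set
open scoped ENNReal

lemma real_beta_integral {p q : ℝ} (hp : 0 < p) (hq : 0 < q) :
    ∫ t in (0:ℝ)..1, t ^ (p - 1) * (1 - t) ^ (q - 1)
      = Real.Gamma p * Real.Gamma q / Real.Gamma (p + q) := by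
  have key := Complex.Gamma_mul_Gamma_eq_betaIntegral (s := (p:ℂ)) (t := (q:ℂ))
    (by simpa using hp) (by simpa using hq)
  have hbeta : Complex.betaIntegral p q
      = ((∫ t in (0:ℝ)..1, t ^ (p - 1) * (1 - t) ^ (q - 1) : ℝ) : ℂ) := by
    rw [Complex.betaIntegral, ← intervalIntegral.integral_ofReal]
    refine intervalIntegral.integral_congr fun x hx => ?_
    rw [Set.uIcc_of_le (by norm_num : (0:ℝ) ≤ 1)] at hx
    push_cast
    rw [Complex.ofReal_cpow hx.1, Complex.ofReal_cpow (by linarith [hx.2] : (0:ℝ) ≤ 1 - x)]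
    push_cast
    ring
  have hGpos : 0 < Real.Gamma (p + q) := Real.Gamma_pos_of_pos (by linarith)
  rw [hbeta, ← Complex.ofReal_add, Complex.Gamma_ofReal, Complex.Gamma_ofReal,
    Complex.Gamma_ofReal, ← Complex.ofReal_mul, ← Complex.ofReal_mul] at key
  have hkey := Complex.ofReal_injective key
  field_simp
  linarith [hkey]

/-- Let `σ > 0`, `ξ < 0` and let `a` be a real constant with `a > ξ`. Then
`∫_0^{-σ/ξ} v^{-a/ξ} σ⁻¹ (1 + ξ v/σ)^{-(1+1/ξ)} dv
  = (-ξ)^{a/ξ - 1} σ^{-a/ξ} Γ(1 - a/ξ) Γ(-1/ξ) / Γ(1 - (a+1)/ξ)`,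
where `Γ` is the real Gamma function. -/
theorem gp_negative_power_moment (σ ξ a : ℝ) (hσ : 0 < σ) (hξ : ξ < 0) (ha : ξ < a) :
    ∫ v in Set.Ioo (0 : ℝ) (-σ / ξ),
        v ^ (-a / ξ) * (σ⁻¹ * (1 + ξ * v / σ) ^ (-(1 + 1 / ξ)))
      = (-ξ) ^ (a / ξ - 1) * σ ^ (-a / ξ) *
          (Real.Gamma (1 - a / ξ) * Real.Gamma (-1 / ξ) /
            Real.Gamma (1 - (a + 1) / ξ)) := by
  have hξ0 : ξ ≠ 0 := ne_of_lt hξ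
  have hσ0 : σ ≠ 0 := ne_of_gt hσ
  set c : ℝ := -σ / ξ with hc_def
  have hc : 0 < c := div_pos_of_neg_of_neg (by linarith) hξ
  set p : ℝ := 1 - a / ξ with hp_def
  set q : ℝ := -1 / ξ with hq_def
  have hp : 0 < p := by
    have h1 : (a - ξ) / ξ < 0 := div_neg_of_pos_of_neg (by linarith) hξ
    have h2 : a / ξ - 1 = (a - ξ) / ξ := by field_simp
    simp only [hp_def]; linarith
  have hq : 0 < q := div_pos_of_neg_of_neg (by norm_num) hξ
  -- convert to interval integral
  rw [← MeasureTheory.integral_Ioc_eq_integral_Ioo,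
    ← intervalIntegral.integral_of_le hc.le]
  -- substitution v = c * t
  have hsub := intervalIntegral.smul_integral_comp_mul_left
    (a := 0) (b := 1)
    (fun v => v ^ (-a / ξ) * (σ⁻¹ * (1 + ξ * v / σ) ^ (-(1 + 1 / ξ)))) c
  simp only [mul_zero, mul_one] at hsub
  rw [← hsub]
  -- compute inner integral
  have hcongr : ∀ t ∈ Set.uIcc (0:ℝ) 1,
      (c * t) ^ (-a / ξ) * (σ⁻¹ * (1 + ξ * (c * t) / σ) ^ (-(1 + 1 / ξ)))
        = (c ^ (-a / ξ) * σ⁻¹) * (t ^ (p - 1) * (1 - t) ^ (q - 1)) := by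
    intro t ht
    rw [Set.uIcc_of_le (by norm_num : (0:ℝ) ≤ 1)] at ht
    have harg : 1 + ξ * (c * t) / σ = 1 - t := by
      rw [hc_def]; field_simp; ring
    have hexp1 : p - 1 = -a / ξ := by simp only [hp_def]; ring
    have hexp2 : q - 1 = -(1 + 1 / ξ) := by simp only [hq_def]; ring
    rw [harg, Real.mul_rpow hc.le ht.1, hexp1, hexp2]
    ring
  rw [intervalIntegral.integral_congr hcongr, intervalIntegral.integral_const_mul,
    real_beta_integral hp hq]
  have hpq : p + q = 1 - (a + 1) / ξ := by
    simp only [hp_def, hq_def]; field_simp; ring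
  rw [hpq]
  -- constants
  have hnξ : (0:ℝ) < -ξ := by linarith
  have hconst : c * (c ^ (-a / ξ) * σ⁻¹) = (-ξ) ^ (a / ξ - 1) * σ ^ (-a / ξ) := by
    have hc_eq : c = σ / (-ξ) := by rw [hc_def]; ring
    have h1 : c * c ^ (-a / ξ) = c ^ (1 - a / ξ) := by
      rw [show (1 - a/ξ) = 1 + (-a/ξ) by ring, Real.rpow_add hc, Real.rpow_one]
    have h2 : c ^ (1 - a/ξ) = σ ^ (1 - a/ξ) / (-ξ) ^ (1 - a/ξ) := by
      rw [hc_eq, Real.div_rpow hσ.le hnξ.le]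
    have h3 : (-ξ) ^ (a/ξ - 1) = ((-ξ) ^ (1 - a/ξ))⁻¹ := by
      rw [show (a/ξ - 1) = -(1 - a/ξ) by ring, Real.rpow_neg hnξ.le]
    have h4 : σ ^ (1 - a/ξ) = σ * σ ^ (-a/ξ) := by
      rw [show (1 - a/ξ) = 1 + (-a/ξ) by ring, Real.rpow_add hσ, Real.rpow_one]
    have hξr : (-ξ) ^ (1 - a/ξ) ≠ 0 := ne_of_gt (Real.rpow_pos_of_pos hnξ _)
    rw [← mul_assoc, h1, h2, h4, h3]
    field_simp
  rw [smul_eq_mul, ← mul_assoc, hconst]
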